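/- There is no distributive law λ : L ∘ L ⇒ L ∘ L for the list monad over itself on the category of sets; equivalently, there is no composite theory of the theory of monoids after itself. -/

import Mathlib

/-! ## Algebraic theories, equational logic, and composite theories (Pirog–Staton) -/

/-- An algebraic signature: a set of operation symbols with arities. -/
structure Sig : Type 1 where
  ops : Type
  ar : ops → ℕ

/-- Terms over a signature with variables in `X`. -/
inductive Tm (σ : Sig) (X : Type) : Type
  | var : X → Tm σ X
  | op : (g : σ.ops) → (Fin (σ.ar g) → Tm σ X) → Tm σ X

/-- Simultaneous substitution of terms for variables. -/
def Tm.bind {σ : Sig} {X Y : Type} : Tm σ X → (X → Tm σ Y) → Tm σ Y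
  | .var x, f => f x
  | .op g a, f => .op g fun i => (a i).bind f

/-- Substitution of variables for variables (renaming). -/
def Tm.rename {σ : Sig} {X Y : Type} (t : Tm σ X) (f : X → Y) : Tm σ Y :=
  t.bind fun x => .var (f x)

/-- The set of variables occurring in a term. -/
def Tm.vars {σ : Sig} {X : Type} : Tm σ X → Set X
  | .var x => {x}
  | .op _ a => ⋃ i, (a i).vars

/-- An algebraic theory: a signature together with a set of equations
(pairs of terms over natural-number variables). -/
structure Theory : Type 1 where
  sig : Sig
  axioms : Tm sig ℕ → Tm sig ℕ → Prop

/-- Provable equality in equational logic from the axioms of a theory. -/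
inductive Theory.Eq (Th : Theory) : {X : Type} → Tm Th.sig X → Tm Th.sig X → Prop
  | ax {X : Type} {l r : Tm Th.sig ℕ} (h : Th.axioms l r) (f : ℕ → Tm Th.sig X) :
      Theory.Eq Th (l.bind f) (r.bind f)
  | refl {X : Type} (t : Tm Th.sig X) : Theory.Eq Th t t
  | symm {X : Type} {a b : Tm Th.sig X} : Theory.Eq Th a b → Theory.Eq Th b a
  | trans {X : Type} {a b c : Tm Th.sig X} :
      Theory.Eq Th a b → Theory.Eq Th b c → Theory.Eq Th a c
  | congr {X : Type} (g : Th.sig.ops) {a b : Fin (Th.sig.ar g) → Tm Th.sig X}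
      (h : ∀ i, Theory.Eq Th (a i) (b i)) : Theory.Eq Th (.op g a) (.op g b)

/-- A theory is consistent if distinct variables are not provably equal. -/
def Theory.Consistent (Th : Theory) : Prop :=
  ∀ x y : ℕ, Th.Eq (X := ℕ) (.var x) (.var y) → x = y

/-- Disjoint union of signatures. -/
def Sig.sum (σ τ : Sig) : Sig := ⟨σ.ops ⊕ τ.ops, Sum.elim σ.ar τ.ar⟩

/-- Embedding of terms of the left signature into the sum. -/
def Tm.inL {σ τ : Sig} {X : Type} : Tm σ X → Tm (σ.sum τ) X
  | .var x => .var x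
  | .op g a => .op (Sum.inl g) fun i => Tm.inL (a i)

/-- Embedding of terms of the right signature into the sum. -/
def Tm.inR {σ τ : Sig} {X : Type} : Tm τ X → Tm (σ.sum τ) X
  | .var x => .var x
  | .op g a => .op (Sum.inr g) fun i => Tm.inR (a i)

/-- A separated term `t[s_x/x]`: a `τ`-term `t` whose variables are substituted
by `σ`-terms `s x`. -/
def sep {σ τ : Sig} {X : Type} (t : Tm τ X) (s : X → Tm σ ℕ) : Tm (σ.sum τ) ℕ :=
  (Tm.inR t).bind fun x => Tm.inL (s x)

/-- Equality modulo `(T, S)` of two separated terms, in the sense of Pirog and Staton. -/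
def EqMod (S T : Theory) {X X' : Type}
    (t : Tm T.sig X) (s : X → Tm S.sig ℕ)
    (t' : Tm T.sig X') (s' : X' → Tm S.sig ℕ) : Prop :=
  ∃ (Y : Type) (f₁ : X → Y) (f₂ : X' → Y) (sb : Y → Tm S.sig ℕ),
    T.Eq (t.rename f₁) (t'.rename f₂) ∧
    (∀ x, S.Eq (s x) (sb (f₁ x))) ∧
    (∀ x', S.Eq (s' x') (sb (f₂ x')))

/-- A composite theory of `T` after `S`: a theory on the disjoint union of the
signatures, containing both `S` and `T`, in which every term is provably equal to
a separated term (a `T`-term of `S`-terms), essentially uniquely. -/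
structure Composite (S T : Theory) where
  axioms : Tm (S.sig.sum T.sig) ℕ → Tm (S.sig.sum T.sig) ℕ → Prop
  containsS : ∀ {X : Type} (a b : Tm S.sig X), S.Eq a b →
    Theory.Eq ⟨S.sig.sum T.sig, axioms⟩ (Tm.inL a) (Tm.inL b)
  containsT : ∀ {X : Type} (a b : Tm T.sig X), T.Eq a b →
    Theory.Eq ⟨S.sig.sum T.sig, axioms⟩ (Tm.inR a) (Tm.inR b)
  separation : ∀ u : Tm (S.sig.sum T.sig) ℕ,
    ∃ (X : Type) (t : Tm T.sig X) (s : X → Tm S.sig ℕ),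
      Theory.Eq ⟨S.sig.sum T.sig, axioms⟩ u (sep t s)
  essentiallyUnique : ∀ {X X' : Type} (t : Tm T.sig X) (s : X → Tm S.sig ℕ)
      (t' : Tm T.sig X') (s' : X' → Tm S.sig ℕ),
      Theory.Eq ⟨S.sig.sum T.sig, axioms⟩ (sep t s) (sep t' s') →
      EqMod S T t s t' s'

/-- The underlying theory of a composite. -/
def Composite.theory {S T : Theory} (C : Composite S T) : Theory :=
  ⟨S.sig.sum T.sig, C.axioms⟩

/-- A set of terms is stable if it is closed under renaming of variables. -/
def Stable {σ : Sig} (Ts : Set (Tm σ ℕ)) : Prop :=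
  ∀ t ∈ Ts, ∀ f : ℕ → ℕ, t.rename f ∈ Ts

/-- A set of terms is universal if every term is provably equal to one in the set. -/
def Universal (Th : Theory) (Ts : Set (Tm Th.sig ℕ)) : Prop :=
  ∀ t : Tm Th.sig ℕ, ∃ t' ∈ Ts, Th.Eq t t'

/-- Apply a binary term (a term with variables among `0` and `1`) to two arguments. -/
def subst2 {σ : Sig} {X : Type} (b : Tm σ ℕ) (t u : Tm σ X) : Tm σ X :=
  b.bind fun i => if i = 0 then t else u

/-- Operations of the theory of monoids. -/
inductive MonOp : Type | e | mul

/-- Signature of monoids: a constant and a binary operation. -/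
def MonSig : Sig := ⟨MonOp, fun o => match o with | .e => 0 | .mul => 2⟩

def Mon.one {X : Type} : Tm MonSig X := .op .e Fin.elim0
def Mon.mul {X : Type} (t u : Tm MonSig X) : Tm MonSig X :=
  .op .mul fun i => if i.val = 0 then t else u

/-- Axioms of monoids: unit laws and associativity. -/
inductive MonAx : Tm MonSig ℕ → Tm MonSig ℕ → Prop
  | unitL : MonAx (Mon.mul Mon.one (.var 0)) (.var 0)
  | unitR : MonAx (Mon.mul (.var 0) Mon.one) (.var 0)
  | assoc : MonAx (Mon.mul (Mon.mul (.var 0) (.var 1)) (.var 2))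
                  (Mon.mul (.var 0) (Mon.mul (.var 1) (.var 2)))

/-- The algebraic theory of monoids, presenting the list monad. -/
def MonTheory : Theory := ⟨MonSig, MonAx⟩


/-! ### Auxiliary machinery -/

section Aux

attribute [reducible] MonSig MonTheory Sig.sum

theorem Tm.bind_assoc {σ : Sig} {X Y Z : Type} (t : Tm σ X) (f : X → Tm σ Y) (g : Y → Tm σ Z) :
    (t.bind f).bind g = t.bind (fun x => (f x).bind g) := by
  induction t with
  | var x => rfl
  | op o a ih => simp only [Tm.bind]; congr 1; funext i; exact ih i

theorem Theory.Eq.bind_subst {Th : Theory} {X Y : Type} {a b : Tm Th.sig X}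
    (h : Th.Eq a b) (f : X → Tm Th.sig Y) : Th.Eq (a.bind f) (b.bind f) := by
  induction h with
  | ax hax g => rw [Tm.bind_assoc, Tm.bind_assoc]; exact Theory.Eq.ax hax _
  | refl t => exact Theory.Eq.refl _
  | symm _ ih => exact Theory.Eq.symm ih
  | trans _ _ ih1 ih2 => exact Theory.Eq.trans ih1 ih2
  | congr g _ ih =>
      simp only [Tm.bind]
      exact Theory.Eq.congr g (fun i => ih i)

theorem Theory.Eq.bind_congr {Th : Theory} {X Y : Type} (t : Tm Th.sig X)
    {f g : X → Tm Th.sig Y} (h : ∀ x, Th.Eq (f x) (g x)) :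
    Th.Eq (t.bind f) (t.bind g) := by
  induction t with
  | var x => exact h x
  | op o a ih =>
      simp only [Tm.bind]
      exact Theory.Eq.congr o (fun i => ih i)

theorem Theory.Eq.binCongr {Th : Theory} {X : Type} (g : Th.sig.ops)
    {a a' b b' : Tm Th.sig X} (ha : Th.Eq a a') (hb : Th.Eq b b') :
    Th.Eq (.op g (fun i => if i.val = 0 then a else b))
          (.op g (fun i => if i.val = 0 then a' else b')) :=
  Theory.Eq.congr g (fun i => by by_cases h : (i : Nat) = 0 <;> simp [h] <;> assumption)

instance : OfNat (Fin (MonSig.ar MonOp.mul)) 0 := ⟨⟨0, Nat.zero_lt_two⟩⟩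
instance : OfNat (Fin (MonSig.ar MonOp.mul)) 1 := ⟨⟨1, Nat.one_lt_two⟩⟩
instance : OfNat (Fin (MonTheory.sig.ar MonOp.mul)) 0 := ⟨⟨0, Nat.zero_lt_two⟩⟩
instance : OfNat (Fin (MonTheory.sig.ar MonOp.mul)) 1 := ⟨⟨1, Nat.one_lt_two⟩⟩

theorem op_mul_eta {X : Type} (a : Fin (MonSig.ar MonOp.mul) → Tm MonSig X) :
    Tm.op MonOp.mul a = Mon.mul (a 0) (a 1) := by
  have h : a = fun i : Fin (MonSig.ar MonOp.mul) => if (i : ℕ) = 0 then a 0 else a 1 := by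
    funext i
    match i with
    | ⟨0, _⟩ => rfl
    | ⟨1, _⟩ => rfl
  rw [Mon.mul]
  exact congrArg (Tm.op (σ := MonSig) MonOp.mul) h

/-! ### The free monoid interpretation -/

def evalM {X : Type} : Tm MonSig X → List X
  | .var x => [x]
  | .op .e _ => []
  | .op .mul a => evalM (a 0) ++ evalM (a 1)

theorem evalM_one {X : Type} : evalM (Mon.one (X := X)) = [] := rfl

theorem evalM_mul {X : Type} (a b : Tm MonSig X) :
    evalM (Mon.mul a b) = evalM a ++ evalM b := rfl

theorem Mon.one_bind {X Y : Type} (f : X → Tm MonSig Y) :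
    Mon.one.bind f = Mon.one := by
  simp only [Mon.one, Tm.bind]
  congr 1
  funext i
  exact i.elim0

theorem Mon.mul_bind {X Y : Type} (a b : Tm MonSig X) (f : X → Tm MonSig Y) :
    (Mon.mul a b).bind f = Mon.mul (a.bind f) (b.bind f) := by
  simp only [Mon.mul, Tm.bind]
  congr 1
  funext i
  by_cases h : (i : ℕ) = 0 <;> simp [h]

theorem evalM_bind {X Y : Type} (t : Tm MonSig X) (f : X → Tm MonSig Y) :
    evalM (t.bind f) = (evalM t).flatMap (fun x => evalM (f x)) := by
  induction t with
  | var x => simp [Tm.bind, evalM]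
  | op o a ih =>
      cases o with
      | e => simp [Tm.bind, evalM]
      | mul =>
          have h0 := ih 0
          have h1 := ih 1
          simp [Tm.bind, evalM, h0, h1]

theorem evalM_rename {X Y : Type} (t : Tm MonSig X) (f : X → Y) :
    evalM (t.rename f) = (evalM t).map f := by
  simp [Tm.rename, evalM_bind, evalM]
  induction (evalM t) with
  | nil => rfl
  | cons x l ih => simp [ih, evalM]

theorem mon_sound {X : Type} {a b : Tm MonSig X} (h : MonTheory.Eq a b) :
    evalM a = evalM b := by
  have key : ∀ {X : Type} {a b : Tm MonTheory.sig X}, MonTheory.Eq a b → evalM a = evalM b := by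
    intro X a b h
    induction h with
    | ax hax f =>
        cases hax <;>
          simp [evalM_bind, evalM_mul, evalM_one, evalM, List.append_assoc]
    | refl t => rfl
    | symm _ ih => exact ih.symm
    | trans _ _ ih1 ih2 => exact ih1.trans ih2
    | congr g h ih =>
        cases g with
        | e => rfl
        | mul => simp [evalM, ih 0, ih 1]
  exact key h


/-! ### Canonical forms and completeness for the monoid theory -/

def canonM {X : Type} : List X → Tm MonSig X
  | [] => Mon.one
  | x :: l => Mon.mul (.var x) (canonM l)

theorem evalM_canon {X : Type} (l : List X) : evalM (canonM l) = l := by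
  induction l with
  | nil => rfl
  | cons x l ih => simp [canonM, evalM_mul, ih, evalM]

theorem meq_mul {X : Type} {a a' b b' : Tm MonSig X}
    (ha : MonTheory.Eq a a') (hb : MonTheory.Eq b b') :
    MonTheory.Eq (Mon.mul a b) (Mon.mul a' b') := by
  unfold Mon.mul
  exact Theory.Eq.binCongr MonOp.mul ha hb

theorem meq_unitL {X : Type} (a : Tm MonSig X) :
    MonTheory.Eq (Mon.mul Mon.one a) a := by
  have h := Theory.Eq.ax (Th := MonTheory) MonAx.unitL (fun _ => a)
  rw [Mon.mul_bind, Mon.one_bind] at h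
  exact h

theorem meq_unitR {X : Type} (a : Tm MonSig X) :
    MonTheory.Eq (Mon.mul a Mon.one) a := by
  have h := Theory.Eq.ax (Th := MonTheory) MonAx.unitR (fun _ => a)
  rw [Mon.mul_bind, Mon.one_bind] at h
  exact h

theorem meq_assoc {X : Type} (a b c : Tm MonSig X) :
    MonTheory.Eq (Mon.mul (Mon.mul a b) c) (Mon.mul a (Mon.mul b c)) := by
  have h := Theory.Eq.ax (Th := MonTheory) MonAx.assoc
    (fun n => if n = 0 then a else if n = 1 then b else c)
  rw [Mon.mul_bind, Mon.mul_bind, Mon.mul_bind, Mon.mul_bind] at h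
  exact h

theorem canon_append {X : Type} (l₁ l₂ : List X) :
    MonTheory.Eq (Mon.mul (canonM l₁) (canonM l₂)) (canonM (l₁ ++ l₂)) := by
  induction l₁ with
  | nil => simpa [canonM] using meq_unitL (canonM l₂)
  | cons x l ih =>
      simp only [canonM, List.cons_append]
      exact Theory.Eq.trans (meq_assoc _ _ _) (meq_mul (Theory.Eq.refl _) ih)

theorem canon_eq {X : Type} (t : Tm MonSig X) : MonTheory.Eq t (canonM (evalM t)) := by
  induction t with
  | var x =>
      simpa [canonM, evalM] using Theory.Eq.symm (meq_unitR (Tm.var (σ := MonSig) x))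
  | op g a ih =>
      cases g with
      | e =>
          have : Tm.op MonOp.e a = Mon.one (X := X) := by
            rw [Mon.one]; exact congrArg (Tm.op (σ := MonSig) MonOp.e)
              (funext fun i => i.elim0)
          rw [this]
          exact Theory.Eq.refl _
      | mul =>
          rw [op_mul_eta a]
          have h1 : MonTheory.Eq (Mon.mul (a 0) (a 1))
              (Mon.mul (canonM (evalM (a 0))) (canonM (evalM (a 1)))) :=
            meq_mul (ih 0) (ih 1)
          have h2 := canon_append (evalM (a 0)) (evalM (a 1))
          have : evalM (Mon.mul (a 0) (a 1)) = evalM (a 0) ++ evalM (a 1) := evalM_mul _ _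
          rw [this]
          exact Theory.Eq.trans h1 h2

theorem mon_complete {X : Type} {a b : Tm MonSig X} (h : evalM a = evalM b) :
    MonTheory.Eq a b := by
  have ha := canon_eq a
  have hb := canon_eq b
  rw [h] at ha
  exact Theory.Eq.trans ha (Theory.Eq.symm hb)


/-! ### The sum of two monoid signatures -/

abbrev SS : Sig := Sig.sum MonSig MonSig

def sOne {X : Type} : Tm SS X := .op (Sum.inl MonOp.e) Fin.elim0
def sMul {X : Type} (a b : Tm SS X) : Tm SS X :=
  .op (Sum.inl MonOp.mul) (fun i => if i.val = 0 then a else b)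
def tOne {X : Type} : Tm SS X := .op (Sum.inr MonOp.e) Fin.elim0
def tMul {X : Type} (a b : Tm SS X) : Tm SS X :=
  .op (Sum.inr MonOp.mul) (fun i => if i.val = 0 then a else b)

theorem inL_var {X : Type} (x : X) :
    Tm.inL (σ := MonSig) (τ := MonSig) (Tm.var x) = Tm.var x := rfl

theorem inL_one {X : Type} :
    Tm.inL (σ := MonSig) (τ := MonSig) (Mon.one (X := X)) = sOne := by
  show Tm.op _ _ = _
  unfold sOne
  congr 1
  funext i
  exact i.elim0

theorem inL_mul {X : Type} (a b : Tm MonSig X) :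
    Tm.inL (σ := MonSig) (τ := MonSig) (Mon.mul a b) = sMul (Tm.inL a) (Tm.inL b) := by
  show Tm.op _ _ = _
  unfold sMul
  congr 1
  funext i
  by_cases h : (i : ℕ) = 0 <;> simp [h]

theorem inR_var {X : Type} (x : X) :
    Tm.inR (σ := MonSig) (τ := MonSig) (Tm.var x) = Tm.var x := rfl

theorem inR_one {X : Type} :
    Tm.inR (σ := MonSig) (τ := MonSig) (Mon.one (X := X)) = tOne := by
  show Tm.op _ _ = _
  unfold tOne
  congr 1
  funext i
  exact i.elim0

theorem inR_mul {X : Type} (a b : Tm MonSig X) :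
    Tm.inR (σ := MonSig) (τ := MonSig) (Mon.mul a b) = tMul (Tm.inR a) (Tm.inR b) := by
  show Tm.op _ _ = _
  unfold tMul
  congr 1
  funext i
  by_cases h : (i : ℕ) = 0 <;> simp [h]

theorem sOne_bind {X Y : Type} (f : X → Tm SS Y) : sOne.bind f = sOne := by
  show Tm.op _ _ = _
  unfold sOne
  congr 1
  funext i
  exact i.elim0

theorem tOne_bind {X Y : Type} (f : X → Tm SS Y) : tOne.bind f = tOne := by
  show Tm.op _ _ = _
  unfold tOne
  congr 1
  funext i
  exact i.elim0

theorem sMul_bind {X Y : Type} (a b : Tm SS X) (f : X → Tm SS Y) :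
    (sMul a b).bind f = sMul (a.bind f) (b.bind f) := by
  show Tm.op _ _ = _
  unfold sMul
  congr 1
  funext i
  by_cases h : (i : ℕ) = 0 <;> simp [h]

theorem tMul_bind {X Y : Type} (a b : Tm SS X) (f : X → Tm SS Y) :
    (tMul a b).bind f = tMul (a.bind f) (b.bind f) := by
  show Tm.op _ _ = _
  unfold tMul
  congr 1
  funext i
  by_cases h : (i : ℕ) = 0 <;> simp [h]

theorem inL_bind {X Y : Type} (p : Tm MonSig X) (f : X → Tm MonSig Y) :
    (Tm.inL (σ := MonSig) (τ := MonSig) p).bind (fun x => Tm.inL (f x)) = Tm.inL (p.bind f) := by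
  induction p with
  | var x => rfl
  | op g a ih =>
      simp only [Tm.inL, Tm.bind]
      congr 1
      funext i
      exact ih i

theorem sep_var (x : ℕ) (s : ℕ → Tm MonSig ℕ) :
    sep (σ := MonSig) (τ := MonSig) (Tm.var x) s = Tm.inL (s x) := rfl

theorem sep_one {X : Type} (s : X → Tm MonSig ℕ) :
    sep (σ := MonSig) (τ := MonSig) (Mon.one (X := X)) s = tOne := by
  show (Tm.inR Mon.one).bind _ = _
  rw [inR_one, tOne_bind]

theorem sep_mul {X : Type} (u v : Tm MonSig X) (s : X → Tm MonSig ℕ) :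
    sep (σ := MonSig) (τ := MonSig) (Mon.mul u v) s = tMul (sep u s) (sep v s) := by
  show (Tm.inR (Mon.mul u v)).bind _ = _
  rw [inR_mul, tMul_bind]
  rfl

theorem sep_var' {X : Type} (x : X) (s : X → Tm MonSig ℕ) :
    sep (σ := MonSig) (τ := MonSig) (Tm.var x) s = Tm.inL (s x) := rfl

theorem sep_bind {X : Type} (t : Tm MonSig X) (s : X → Tm MonSig ℕ) (g : ℕ → Tm MonSig ℕ) :
    (sep (σ := MonSig) (τ := MonSig) t s).bind (fun k => Tm.inL (g k))
      = sep t (fun x => (s x).bind g) := by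
  unfold sep
  rw [Tm.bind_assoc]
  congr 1
  funext x
  exact inL_bind (s x) g

end Aux




/-! ### Reasoning inside a composite theory -/

section Comp

attribute [reducible] Composite.theory

variable {C : Composite MonTheory MonTheory}

theorem ceq_sMul {X : Type} {a a' b b' : Tm SS X}
    (ha : C.theory.Eq a a') (hb : C.theory.Eq b b') :
    C.theory.Eq (sMul a b) (sMul a' b') := by
  unfold sMul
  exact Theory.Eq.binCongr _ ha hb

theorem ceq_tMul {X : Type} {a a' b b' : Tm SS X}
    (ha : C.theory.Eq a a') (hb : C.theory.Eq b b') :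
    C.theory.Eq (tMul a b) (tMul a' b') := by
  unfold tMul
  exact Theory.Eq.binCongr _ ha hb

theorem ceq_eS_unitR {X : Type} (a : Tm SS X) : C.theory.Eq (sMul a sOne) a := by
  have h1 := C.containsS _ _ (meq_unitR (Tm.var (0 : ℕ)))
  rw [inL_mul, inL_one, inL_var] at h1
  have h2 := h1.bind_subst (fun _ => a)
  rw [sMul_bind, sOne_bind] at h2
  exact h2

theorem ceq_eS_unitL {X : Type} (a : Tm SS X) : C.theory.Eq (sMul sOne a) a := by
  have h1 := C.containsS _ _ (meq_unitL (Tm.var (0 : ℕ)))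
  rw [inL_mul, inL_one, inL_var] at h1
  have h2 := h1.bind_subst (fun _ => a)
  rw [sMul_bind, sOne_bind] at h2
  exact h2

theorem ceq_eT_unitR {X : Type} (a : Tm SS X) : C.theory.Eq (tMul a tOne) a := by
  have h1 := C.containsT _ _ (meq_unitR (Tm.var (0 : ℕ)))
  rw [inR_mul, inR_one, inR_var] at h1
  have h2 := h1.bind_subst (fun _ => a)
  rw [tMul_bind, tOne_bind] at h2
  exact h2

theorem ceq_eT_unitL {X : Type} (a : Tm SS X) : C.theory.Eq (tMul tOne a) a := by
  have h1 := C.containsT _ _ (meq_unitL (Tm.var (0 : ℕ)))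
  rw [inR_mul, inR_one, inR_var] at h1
  have h2 := h1.bind_subst (fun _ => a)
  rw [tMul_bind, tOne_bind] at h2
  exact h2

theorem ceq_eT_assoc {X : Type} (a b c : Tm SS X) :
    C.theory.Eq (tMul (tMul a b) c) (tMul a (tMul b c)) := by
  have h1 := C.containsT _ _ (meq_assoc (Tm.var (0 : ℕ)) (Tm.var 1) (Tm.var 2))
  rw [inR_mul, inR_mul, inR_mul, inR_mul, inR_var, inR_var, inR_var] at h1
  have h2 := h1.bind_subst (fun n => if n = 0 then a else if n = 1 then b else c)
  rw [tMul_bind, tMul_bind, tMul_bind, tMul_bind] at h2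
  exact h2

/-- Extract equality of word values from a provable equality of purely `S`-terms. -/
theorem ceq_inL_eval {w w' : Tm MonSig ℕ}
    (h : C.theory.Eq (Tm.inL w) (Tm.inL w')) : evalM w = evalM w' := by
  have h' : C.theory.Eq (sep (Tm.var () : Tm MonSig Unit) (fun _ => w))
      (sep (Tm.var () : Tm MonSig Unit) (fun _ => w')) := h
  obtain ⟨Y, f₁, f₂, sb, hT, h1, h2⟩ := C.essentiallyUnique _ _ _ _ h'
  have e := mon_sound hT
  rw [evalM_rename, evalM_rename] at e
  simp [evalM] at e
  calc evalM w = evalM (sb (f₁ ())) := mon_sound (h1 ())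
    _ = evalM (sb (f₂ ())) := by rw [e]
    _ = evalM w' := (mon_sound (h2 ())).symm

theorem ceq_absorb_baseL : C.theory.Eq (sMul tOne (Tm.var 0)) tOne := by
  obtain ⟨X, t, s, hsep⟩ := C.separation (sMul tOne (Tm.var 0))
  have h2 := hsep.bind_subst (fun _ => sOne (X := ℕ))
  rw [sMul_bind, tOne_bind] at h2
  have e1 : (sep t s).bind (fun _ => sOne)
      = sep t (fun x => (s x).bind (fun _ => Mon.one)) := by
    have e0 : (fun _ : ℕ => sOne (X := ℕ)) = fun k => Tm.inL ((fun _ => Mon.one) k) := by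
      funext k; rw [inL_one]
    rw [e0, sep_bind]
  rw [e1] at h2
  have h3 : C.theory.Eq tOne (sep t (fun x => (s x).bind (fun _ => Mon.one))) :=
    (ceq_eS_unitR tOne).symm.trans h2
  have h4 : C.theory.Eq (sep t (fun x => (s x).bind (fun _ => Mon.one)))
      (sep (Mon.one (X := Empty)) (fun x => x.elim)) := by
    rw [sep_one]; exact h3.symm
  obtain ⟨Y, f₁, f₂, sb, hT, _, _⟩ := C.essentiallyUnique _ _ _ _ h4
  have hev := mon_sound hT
  rw [evalM_rename, evalM_rename, evalM_one] at hev
  have hnil : evalM t = [] := by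
    cases h : evalM t with
    | nil => rfl
    | cons y l => rw [h] at hev; simp at hev
  have ht1 : MonTheory.Eq t Mon.one := by
    have hc := canon_eq t
    rw [hnil] at hc
    exact hc
  have h6 := C.containsT _ _ ht1
  rw [inR_one] at h6
  have h7 := h6.bind_subst (fun x => Tm.inL (s x))
  rw [tOne_bind] at h7
  exact hsep.trans h7

theorem ceq_absorb_baseR : C.theory.Eq (sMul (Tm.var 0) tOne) tOne := by
  obtain ⟨X, t, s, hsep⟩ := C.separation (sMul (Tm.var 0) tOne)
  have h2 := hsep.bind_subst (fun _ => sOne (X := ℕ))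
  rw [sMul_bind, tOne_bind] at h2
  have e1 : (sep t s).bind (fun _ => sOne)
      = sep t (fun x => (s x).bind (fun _ => Mon.one)) := by
    have e0 : (fun _ : ℕ => sOne (X := ℕ)) = fun k => Tm.inL ((fun _ => Mon.one) k) := by
      funext k; rw [inL_one]
    rw [e0, sep_bind]
  rw [e1] at h2
  have h3 : C.theory.Eq tOne (sep t (fun x => (s x).bind (fun _ => Mon.one))) :=
    (ceq_eS_unitL tOne).symm.trans h2
  have h4 : C.theory.Eq (sep t (fun x => (s x).bind (fun _ => Mon.one)))
      (sep (Mon.one (X := Empty)) (fun x => x.elim)) := by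
    rw [sep_one]; exact h3.symm
  obtain ⟨Y, f₁, f₂, sb, hT, _, _⟩ := C.essentiallyUnique _ _ _ _ h4
  have hev := mon_sound hT
  rw [evalM_rename, evalM_rename, evalM_one] at hev
  have hnil : evalM t = [] := by
    cases h : evalM t with
    | nil => rfl
    | cons y l => rw [h] at hev; simp at hev
  have ht1 : MonTheory.Eq t Mon.one := by
    have hc := canon_eq t
    rw [hnil] at hc
    exact hc
  have h6 := C.containsT _ _ ht1
  rw [inR_one] at h6
  have h7 := h6.bind_subst (fun x => Tm.inL (s x))
  rw [tOne_bind] at h7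
  exact hsep.trans h7

theorem ceq_absorbL {X : Type} (a : Tm SS X) : C.theory.Eq (sMul tOne a) tOne := by
  have h := (ceq_absorb_baseL (C := C)).bind_subst (fun _ => a)
  rw [sMul_bind, tOne_bind] at h
  exact h

theorem ceq_absorbR {X : Type} (a : Tm SS X) : C.theory.Eq (sMul a tOne) tOne := by
  have h := (ceq_absorb_baseR (C := C)).bind_subst (fun _ => a)
  rw [sMul_bind, tOne_bind] at h
  exact h


theorem flatMap_ite (l : List ℕ) (p : ℕ) :
    (l.flatMap fun k => if k = p then ([] : List ℕ) else [k])
      = l.filter (fun k => decide (k ≠ p)) := by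
  induction l with
  | nil => rfl
  | cons x l ih => by_cases h : x = p <;> simp [h, ih]

/-- Substituting the `T`-unit for the variable `c` inside a purely `S`-term. -/
theorem ceq_kill (c : ℕ) (p : Tm MonSig ℕ) :
    C.theory.Eq ((Tm.inL p).bind (fun k => if k = c then tOne else Tm.var k))
      (if c ∈ evalM p then tOne else Tm.inL p) := by
  induction p with
  | var k =>
      by_cases h : k = c
      · subst h
        simp only [inL_var, Tm.bind, if_pos rfl, evalM, List.mem_singleton]
        exact Theory.Eq.refl _
      · simp only [inL_var, Tm.bind, if_neg h, evalM, List.mem_singleton,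
          if_neg (Ne.symm h)]
        exact Theory.Eq.refl _
  | op g a ih =>
      cases g with
      | e =>
          have hone : Tm.op MonOp.e a = Mon.one (X := ℕ) := by
            rw [Mon.one]
            exact congrArg (Tm.op (σ := MonSig) MonOp.e) (funext fun i => i.elim0)
          rw [hone, inL_one, sOne_bind, evalM_one]
          simp only [List.not_mem_nil, if_false]
          exact Theory.Eq.refl _
      | mul =>
          rw [op_mul_eta a, inL_mul, sMul_bind]
          have h0 := ih 0
          have h1 := ih 1
          by_cases m0 : c ∈ evalM (a 0)
          · rw [if_pos m0] at h0
            rw [evalM_mul, if_pos (List.mem_append.mpr (Or.inl m0))]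
            exact (ceq_sMul h0 (Theory.Eq.refl _)).trans (ceq_absorbL _)
          · rw [if_neg m0] at h0
            by_cases m1 : c ∈ evalM (a 1)
            · rw [if_pos m1] at h1
              rw [evalM_mul, if_pos (List.mem_append.mpr (Or.inr m1))]
              exact (ceq_sMul h0 h1).trans (ceq_absorbR _)
            · rw [if_neg m1] at h1
              rw [evalM_mul, if_neg (by simp [m0, m1])]
              exact ceq_sMul h0 h1

/-- Collapsing the `T`-unit entries of a separated word. -/
theorem ceq_bindG {X : Type} (l : List X) (s : X → Tm MonSig ℕ) (P : X → Prop)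
    [DecidablePred P] :
    C.theory.Eq ((Tm.inR (canonM l)).bind (fun x => if P x then tOne else Tm.inL (s x)))
      (sep (canonM (l.filter (fun x => decide (¬ P x)))) s) := by
  induction l with
  | nil =>
      rw [show canonM ([] : List X) = Mon.one from rfl, inR_one, tOne_bind,
        List.filter_nil, show canonM ([] : List X) = Mon.one from rfl, sep_one]
      exact Theory.Eq.refl _
  | cons x l ih =>
      rw [show canonM (x :: l) = Mon.mul (.var x) (canonM l) from rfl,
        inR_mul, tMul_bind, inR_var]
      by_cases hp : P x
      · have hb : ((Tm.var x).bind
            (fun x => if P x then tOne else Tm.inL (s x))) = tOne := by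
          simp [Tm.bind, hp]
        rw [hb, List.filter_cons_of_neg (by simp [hp])]
        exact (ceq_eT_unitL _).trans ih
      · have hb : ((Tm.var x).bind
            (fun x => if P x then tOne else Tm.inL (s x))) = Tm.inL (s x) := by
          simp [Tm.bind, hp]
        rw [hb, List.filter_cons_of_pos (by simp [hp]),
          show canonM (x :: l.filter (fun x => decide (¬ P x)))
            = Mon.mul (.var x) (canonM (l.filter (fun x => decide (¬ P x)))) from rfl,
          sep_mul, sep_var']
        exact ceq_tMul (Theory.Eq.refl _) ih


/-- The key forced-distributivity lemma. -/
theorem ceq_dist_aux (w : Tm SS ℕ) (p c₀ c₁ : ℕ)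
    (h0p : c₀ ≠ p) (h1p : c₁ ≠ p) (h01 : c₀ ≠ c₁)
    (wa wb : Tm MonSig ℕ)
    (hu : C.theory.Eq (w.bind (fun k => if k = p then sOne else Tm.var k))
          (tMul (Tm.var c₀) (Tm.var c₁)))
    (ha : C.theory.Eq (w.bind (fun k => if k = c₁ then tOne else Tm.var k)) (Tm.inL wa))
    (hb : C.theory.Eq (w.bind (fun k => if k = c₀ then tOne else Tm.var k)) (Tm.inL wb)) :
    C.theory.Eq w (tMul (Tm.inL wa) (Tm.inL wb)) := by
  obtain ⟨X, t, s, hsep⟩ := C.separation w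
  -- Step 1 : substitute the S-unit for p and use essential uniqueness
  have h2 := hsep.bind_subst (fun k => if k = p then sOne (X := ℕ) else Tm.var k)
  have e1 : (sep t s).bind (fun k => if k = p then sOne (X := ℕ) else Tm.var k)
      = sep t (fun x => (s x).bind (fun k => if k = p then Mon.one else Tm.var k)) := by
    have e0 : (fun k : ℕ => if k = p then sOne (X := ℕ) else Tm.var k)
        = fun k => Tm.inL ((fun k : ℕ => if k = p then Mon.one else Tm.var k) k) := by
      funext k
      by_cases h : k = p <;> simp [h, inL_one, inL_var]
    rw [e0, sep_bind]
  rw [e1] at h2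
  have hsep2 : tMul (Tm.var c₀) (Tm.var c₁)
      = sep (Mon.mul (Tm.var false) (Tm.var true))
          (fun b => if b then Tm.var c₁ else Tm.var c₀) := by
    rw [sep_mul, sep_var', sep_var']
    simp [inL_var]
  have h3 : C.theory.Eq
      (sep t (fun x => (s x).bind (fun k => if k = p then Mon.one else Tm.var k)))
      (sep (Mon.mul (Tm.var false) (Tm.var true))
        (fun b => if b then Tm.var c₁ else Tm.var c₀)) := by
    rw [← hsep2]
    exact h2.symm.trans hu
  obtain ⟨Y, g₁, g₂, sb, hT, hv1, hv2⟩ := C.essentiallyUnique _ _ _ _ h3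
  have hev := mon_sound hT
  rw [evalM_rename, evalM_rename] at hev
  have e2 : evalM (Mon.mul (Tm.var false) (Tm.var true)) = [false, true] := rfl
  rw [e2] at hev
  obtain ⟨a, b, hab⟩ : ∃ a b, evalM t = [a, b] := by
    match ht : evalM t with
    | [] => rw [ht] at hev; simp at hev
    | [a] => rw [ht] at hev; simp at hev
    | [a, b] => exact ⟨a, b, rfl⟩
    | a :: b :: c :: tl => rw [ht] at hev; simp at hev
  rw [hab] at hev
  rw [List.map_cons, List.map_cons, List.map_nil] at hev
  injection hev with hga hev'
  injection hev' with hgb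
  -- the filtered words
  have key : ∀ x, evalM ((s x).bind (fun k => if k = p then Mon.one else Tm.var k))
      = (evalM (s x)).filter (fun k => decide (k ≠ p)) := by
    intro x
    rw [evalM_bind, ← flatMap_ite _ p]
    congr 1
    funext k
    by_cases h : k = p <;> simp [h, evalM, evalM_one]
  have hfa : (evalM (s a)).filter (fun k => decide (k ≠ p)) = [c₀] := by
    have e3 := mon_sound (hv1 a)
    have e4 := mon_sound (hv2 false)
    rw [key] at e3
    rw [hga] at e3
    rw [e3, ← e4]
    rfl
  have hfb : (evalM (s b)).filter (fun k => decide (k ≠ p)) = [c₁] := by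
    have e3 := mon_sound (hv1 b)
    have e4 := mon_sound (hv2 true)
    rw [key] at e3
    rw [hgb] at e3
    rw [e3, ← e4]
    rfl
  -- memberships
  have mac₀ : c₀ ∈ evalM (s a) := by
    have : c₀ ∈ (evalM (s a)).filter (fun k => decide (k ≠ p)) := by
      rw [hfa]; exact List.mem_singleton.mpr rfl
    exact List.mem_of_mem_filter this
  have mbc₁ : c₁ ∈ evalM (s b) := by
    have : c₁ ∈ (evalM (s b)).filter (fun k => decide (k ≠ p)) := by
      rw [hfb]; exact List.mem_singleton.mpr rfl
    exact List.mem_of_mem_filter this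
  have mac₁ : c₁ ∉ evalM (s a) := by
    intro hm
    have : c₁ ∈ (evalM (s a)).filter (fun k => decide (k ≠ p)) :=
      List.mem_filter.mpr ⟨hm, by simp [h1p]⟩
    rw [hfa] at this
    exact h01 (List.mem_singleton.mp this).symm
  have mbc₀ : c₀ ∉ evalM (s b) := by
    intro hm
    have : c₀ ∈ (evalM (s b)).filter (fun k => decide (k ≠ p)) :=
      List.mem_filter.mpr ⟨hm, by simp [h0p]⟩
    rw [hfb] at this
    exact h01 (List.mem_singleton.mp this)
  -- replacing t by its canonical form
  have hts : MonTheory.Eq t (canonM [a, b]) := by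
    have hc := canon_eq t
    rw [hab] at hc
    exact hc
  have e6 : ∀ G : X → Tm SS ℕ,
      (Tm.inR (canonM [a, b])).bind G = tMul (G a) (tMul (G b) tOne) := by
    intro G
    rw [show canonM [a, b] = Mon.mul (Tm.var a) (Mon.mul (Tm.var b) Mon.one) from rfl,
      inR_mul, inR_mul, inR_one, tMul_bind, tMul_bind, tOne_bind]
    rfl
  -- analysis of the kill-substitutions
  have kill_analysis : ∀ (c : ℕ) (wc : Tm MonSig ℕ),
      C.theory.Eq (w.bind (fun k => if k = c then tOne else Tm.var k)) (Tm.inL wc) →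
      C.theory.Eq (Tm.inL wc)
        (tMul ((fun x => if c ∈ evalM (s x) then tOne else Tm.inL (s x)) a)
          (tMul ((fun x => if c ∈ evalM (s x) then tOne else Tm.inL (s x)) b) tOne)) := by
    intro c wc hc
    have hc1 := hsep.bind_subst (fun k => if k = c then tOne (X := ℕ) else Tm.var k)
    have e5 : (sep t s).bind (fun k => if k = c then tOne (X := ℕ) else Tm.var k)
        = (Tm.inR t).bind
            (fun x => (Tm.inL (s x)).bind (fun k => if k = c then tOne else Tm.var k)) := by
      unfold sep
      rw [Tm.bind_assoc]
    rw [e5] at hc1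
    have h6 := Theory.Eq.bind_congr (Th := C.theory) (Tm.inR t)
      (fun x => ceq_kill (C := C) c (s x))
    have h7 := (C.containsT _ _ hts).bind_subst
      (fun x => if c ∈ evalM (s x) then tOne else Tm.inL (s x))
    rw [e6] at h7
    exact hc.symm.trans (hc1.trans ((h6.trans h7)))
  -- c₁-kill identifies `wa` with `s a`
  have hwa : C.theory.Eq (Tm.inL wa) (Tm.inL (s a)) := by
    have h8 := kill_analysis c₁ wa ha
    dsimp only at h8
    rw [if_neg mac₁, if_pos mbc₁] at h8
    have h9 : C.theory.Eq (tMul (Tm.inL (s a)) (tMul tOne tOne)) (Tm.inL (s a)) :=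
      (ceq_tMul (Theory.Eq.refl _) (ceq_eT_unitL tOne)).trans (ceq_eT_unitR _)
    exact h8.trans h9
  have hwb : C.theory.Eq (Tm.inL wb) (Tm.inL (s b)) := by
    have h8 := kill_analysis c₀ wb hb
    dsimp only at h8
    rw [if_pos mac₀, if_neg mbc₀] at h8
    have h9 : C.theory.Eq (tMul tOne (tMul (Tm.inL (s b)) tOne)) (Tm.inL (s b)) :=
      (ceq_eT_unitL _).trans (ceq_eT_unitR _)
    exact h8.trans h9
  -- final assembly
  have h10 := (C.containsT _ _ hts).bind_subst (fun x => Tm.inL (s x))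
  rw [e6] at h10
  have h11 : C.theory.Eq (tMul (Tm.inL (s a)) (tMul (Tm.inL (s b)) tOne))
      (tMul (Tm.inL wa) (Tm.inL wb)) :=
    ceq_tMul hwa.symm ((ceq_eT_unitR _).trans hwb.symm)
  exact hsep.trans (h10.trans h11)


theorem ceq_distL_base :
    C.theory.Eq (sMul (tMul (Tm.var 0) (Tm.var 1)) (Tm.var 2))
      (tMul (Tm.inL (Mon.mul (Tm.var 0) (Tm.var 2)))
            (Tm.inL (Mon.mul (Tm.var 1) (Tm.var 2)))) := by
  refine ceq_dist_aux _ 2 0 1 (by decide) (by decide) (by decide) _ _ ?_ ?_ ?_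
  · rw [sMul_bind, tMul_bind]
    show C.theory.Eq (sMul (tMul (Tm.var 0) (Tm.var 1)) sOne) (tMul (Tm.var 0) (Tm.var 1))
    exact ceq_eS_unitR _
  · rw [sMul_bind, tMul_bind, inL_mul, inL_var, inL_var]
    show C.theory.Eq (sMul (tMul (Tm.var 0) tOne) (Tm.var 2)) (sMul (Tm.var 0) (Tm.var 2))
    exact ceq_sMul (ceq_eT_unitR _) (Theory.Eq.refl _)
  · rw [sMul_bind, tMul_bind, inL_mul, inL_var, inL_var]
    show C.theory.Eq (sMul (tMul tOne (Tm.var 1)) (Tm.var 2)) (sMul (Tm.var 1) (Tm.var 2))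
    exact ceq_sMul (ceq_eT_unitL _) (Theory.Eq.refl _)

theorem ceq_distR_base :
    C.theory.Eq (sMul (Tm.var 0) (tMul (Tm.var 1) (Tm.var 2)))
      (tMul (Tm.inL (Mon.mul (Tm.var 0) (Tm.var 1)))
            (Tm.inL (Mon.mul (Tm.var 0) (Tm.var 2)))) := by
  refine ceq_dist_aux _ 0 1 2 (by decide) (by decide) (by decide) _ _ ?_ ?_ ?_
  · rw [sMul_bind, tMul_bind]
    show C.theory.Eq (sMul sOne (tMul (Tm.var 1) (Tm.var 2))) (tMul (Tm.var 1) (Tm.var 2))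
    exact ceq_eS_unitL _
  · rw [sMul_bind, tMul_bind, inL_mul, inL_var, inL_var]
    show C.theory.Eq (sMul (Tm.var 0) (tMul (Tm.var 1) tOne)) (sMul (Tm.var 0) (Tm.var 1))
    exact ceq_sMul (Theory.Eq.refl _) (ceq_eT_unitR _)
  · rw [sMul_bind, tMul_bind, inL_mul, inL_var, inL_var]
    show C.theory.Eq (sMul (Tm.var 0) (tMul tOne (Tm.var 2))) (sMul (Tm.var 0) (Tm.var 2))
    exact ceq_sMul (Theory.Eq.refl _) (ceq_eT_unitL _)

theorem ceq_distL' {X : Type} (A B D : Tm SS X) :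
    C.theory.Eq (sMul (tMul A B) D) (tMul (sMul A D) (sMul B D)) := by
  have h0 := ceq_distL_base (C := C)
  simp only [inL_mul, inL_var] at h0
  have h := h0.bind_subst (fun k => if k = 0 then A else if k = 1 then B else D)
  rw [sMul_bind, tMul_bind, tMul_bind, sMul_bind, sMul_bind] at h
  exact h

theorem ceq_distR' {X : Type} (A B D : Tm SS X) :
    C.theory.Eq (sMul A (tMul B D)) (tMul (sMul A B) (sMul A D)) := by
  have h0 := ceq_distR_base (C := C)
  simp only [inL_mul, inL_var] at h0
  have h := h0.bind_subst (fun k => if k = 0 then A else if k = 1 then B else D)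
  rw [sMul_bind, tMul_bind, tMul_bind, sMul_bind, sMul_bind] at h
  exact h

theorem ceq_flat4 (a b c d : Tm SS ℕ) :
    C.theory.Eq (tMul (tMul a b) (tMul c d))
      (tMul a (tMul b (tMul c (tMul d tOne)))) :=
  (ceq_eT_assoc a b (tMul c d)).trans
    (ceq_tMul (Theory.Eq.refl (Th := C.theory) a)
      (ceq_tMul (Theory.Eq.refl (Th := C.theory) b)
        (ceq_tMul (Theory.Eq.refl (Th := C.theory) c)
          (Theory.Eq.symm (ceq_eT_unitR d)))))

def wordL : ℕ → Tm MonSig ℕ := fun k =>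
  if k = 0 then Mon.mul (.var 0) (.var 2)
  else if k = 1 then Mon.mul (.var 0) (.var 3)
  else if k = 2 then Mon.mul (.var 1) (.var 2)
  else Mon.mul (.var 1) (.var 3)

def wordR : ℕ → Tm MonSig ℕ := fun k =>
  if k = 0 then Mon.mul (.var 0) (.var 2)
  else if k = 1 then Mon.mul (.var 1) (.var 2)
  else if k = 2 then Mon.mul (.var 0) (.var 3)
  else Mon.mul (.var 1) (.var 3)

def tFour : Tm MonSig ℕ :=
  Mon.mul (.var 0) (Mon.mul (.var 1) (Mon.mul (.var 2) (Mon.mul (.var 3) Mon.one)))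

theorem sep_tFour (s : ℕ → Tm MonSig ℕ) :
    sep tFour s = tMul (Tm.inL (s 0)) (tMul (Tm.inL (s 1))
      (tMul (Tm.inL (s 2)) (tMul (Tm.inL (s 3)) tOne))) := by
  unfold tFour
  rw [sep_mul, sep_mul, sep_mul, sep_mul, sep_one, sep_var, sep_var, sep_var, sep_var]

theorem composite_contradiction (C : Composite MonTheory MonTheory) : False := by
  have chainL : C.theory.Eq (sMul (tMul (Tm.var 0) (Tm.var 1)) (tMul (Tm.var 2) (Tm.var 3)))
      (tMul (tMul (sMul (Tm.var 0) (Tm.var 2)) (sMul (Tm.var 0) (Tm.var 3)))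
            (tMul (sMul (Tm.var 1) (Tm.var 2)) (sMul (Tm.var 1) (Tm.var 3)))) :=
    (ceq_distL' (C := C) (Tm.var 0) (Tm.var 1) (tMul (Tm.var 2) (Tm.var 3))).trans
      (ceq_tMul (ceq_distR' _ _ _) (ceq_distR' _ _ _))
  have chainR : C.theory.Eq (sMul (tMul (Tm.var 0) (Tm.var 1)) (tMul (Tm.var 2) (Tm.var 3)))
      (tMul (tMul (sMul (Tm.var 0) (Tm.var 2)) (sMul (Tm.var 1) (Tm.var 2)))
            (tMul (sMul (Tm.var 0) (Tm.var 3)) (sMul (Tm.var 1) (Tm.var 3)))) :=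
    (ceq_distR' (C := C) (tMul (Tm.var 0) (Tm.var 1)) (Tm.var 2) (Tm.var 3)).trans
      (ceq_tMul (ceq_distL' _ _ _) (ceq_distL' _ _ _))
  have hL : C.theory.Eq (sMul (tMul (Tm.var 0) (Tm.var 1)) (tMul (Tm.var 2) (Tm.var 3)))
      (sep tFour wordL) := by
    rw [sep_tFour]
    refine chainL.trans ((ceq_flat4 _ _ _ _).trans ?_)
    rw [show wordL 0 = Mon.mul (.var 0) (.var 2) from rfl,
      show wordL 1 = Mon.mul (.var 0) (.var 3) from rfl,
      show wordL 2 = Mon.mul (.var 1) (.var 2) from rfl,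
      show wordL 3 = Mon.mul (.var 1) (.var 3) from rfl]
    simp only [inL_mul, inL_var]
    exact Theory.Eq.refl _
  have hR : C.theory.Eq (sMul (tMul (Tm.var 0) (Tm.var 1)) (tMul (Tm.var 2) (Tm.var 3)))
      (sep tFour wordR) := by
    rw [sep_tFour]
    refine chainR.trans ((ceq_flat4 _ _ _ _).trans ?_)
    rw [show wordR 0 = Mon.mul (.var 0) (.var 2) from rfl,
      show wordR 1 = Mon.mul (.var 1) (.var 2) from rfl,
      show wordR 2 = Mon.mul (.var 0) (.var 3) from rfl,
      show wordR 3 = Mon.mul (.var 1) (.var 3) from rfl]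
    simp only [inL_mul, inL_var]
    exact Theory.Eq.refl _
  have hLR : C.theory.Eq (sep tFour wordL) (sep tFour wordR) := hL.symm.trans hR
  obtain ⟨Y, g₁, g₂, sb, hT, h1, h2⟩ := C.essentiallyUnique _ _ _ _ hLR
  have hev := mon_sound hT
  rw [evalM_rename, evalM_rename] at hev
  rw [show evalM tFour = [0, 1, 2, 3] from rfl] at hev
  rw [List.map_cons, List.map_cons, List.map_cons, List.map_cons, List.map_nil,
    List.map_cons, List.map_cons, List.map_cons, List.map_cons, List.map_nil] at hev
  injection hev with _ hev
  injection hev with hg1 _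
  have e1 : evalM (wordL 1) = evalM (sb (g₁ 1)) := mon_sound (h1 1)
  have e2 : evalM (wordR 1) = evalM (sb (g₂ 1)) := mon_sound (h2 1)
  rw [← hg1] at e2
  have : evalM (wordL 1) = evalM (wordR 1) := e1.trans e2.symm
  rw [show evalM (wordL 1) = [0, 3] from rfl, show evalM (wordR 1) = [1, 2] from rfl] at this
  simp at this

end Comp




/-- There is no composite theory of the theory of monoids after
itself; equivalently (by Pirog–Staton), there is no distributive law
`L ∘ L ⇒ L ∘ L` for the list monad over itself. -/
theorem no_composite_monoids_after_monoids : IsEmpty (Composite MonTheory MonTheory) :=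
  ⟨fun C => composite_contradiction C⟩
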